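/- Let T > 0, κ ≥ 0, and let g : [0,T] → [0,∞) be measurable with ∫₀ᵀ g(t) dt < ∞. Let (f_n)_{n≥0} be non-negative measurable functions on [0,T] with sup_{t∈[0,T]} f_0(t) < ∞, satisfying f_{n+1}(t) ≤ κ ∫₀ᵗ f_n(s) g(t−s) ds for every n ≥ 0 and t ∈ [0,T]. Then Σ_{n≥0} (sup_{t∈[0,T]} f_n(t))^{1/2} < ∞. -/

import Mathlib

open MeasureTheory Set Filter Topology Real

/-! Weight time by `exp (-c t)`. Since `g` is integrable and `{0}` is null, dominated convergence
makes `κ ∫₀ᵀ exp (-c r) g r dr ≤ 1/4` for `c` large. Substituting `r = t - s` in the recursion then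
gives `f n t ≤ M 4⁻ⁿ exp (c t)` with `M = sup f₀`, so the square roots of the suprema are dominated
by the geometric series `√(M exp (c T)) 2⁻ⁿ`. -/
theorem tendsto_setIntegral_exp_neg_mul_mul {μ : Measure ℝ} {s : Set ℝ} (hs : MeasurableSet s)
    (hs_pos : s ⊆ Ioi 0) {g : ℝ → ℝ} (hg : IntegrableOn g s μ) :
    Tendsto (fun c : ℝ => ∫ r in s, exp (-(c * r)) * g r ∂μ) atTop (𝓝 0) := by
  have hlim : ∀ r ∈ s, Tendsto (fun c : ℝ => exp (-(c * r)) * g r) atTop (𝓝 0) := fun r hr => by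
    simpa using (tendsto_exp_atBot.comp <| tendsto_neg_atTop_atBot.comp <|
      tendsto_id.atTop_mul_const (hs_pos hr)).mul_const (g r)
  have hbound : ∀ᶠ c : ℝ in atTop, ∀ᵐ r ∂μ.restrict s, ‖exp (-(c * r)) * g r‖ ≤ ‖g r‖ := by
    filter_upwards [eventually_ge_atTop 0] with c hc
    refine ae_restrict_of_forall_mem hs fun r hr => ?_
    rw [norm_mul, Real.norm_of_nonneg (exp_nonneg _)]
    refine mul_le_of_le_one_left (norm_nonneg _) (exp_le_one_iff.2 ?_)
    nlinarith [(hs_pos hr).out]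
  simpa using tendsto_integral_filter_of_dominated_convergence (fun r => ‖g r‖)
    (Eventually.of_forall fun c => (by fun_prop : Continuous fun r => exp (-(c * r)))
      |>.aestronglyMeasurable.mul hg.aestronglyMeasurable) hbound hg.norm
    (ae_restrict_of_forall_mem hs hlim)

theorem measurePreserving_sub_left_Icc (t : ℝ) :
    MeasurePreserving (fun s => t - s) (volume.restrict (Icc 0 t)) (volume.restrict (Icc 0 t)) := by
  simpa [preimage_const_sub_Icc] using
    (Measure.measurePreserving_sub_left volume t).restrict_preimage
      (measurableSet_Icc (a := 0) (b := t))

theorem setIntegral_mul_comp_sub_le_of_le_exp {h g : ℝ → ℝ} {t c C : ℝ}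
    (hg : IntegrableOn g (Icc 0 t)) (hg_nonneg : ∀ r ∈ Icc 0 t, 0 ≤ g r)
    (hh_nonneg : ∀ s ∈ Icc 0 t, 0 ≤ h s) (hh_le : ∀ s ∈ Icc 0 t, h s ≤ C * exp (c * s)) :
    ∫ s in Icc 0 t, h s * g (t - s) ≤ C * exp (c * t) * ∫ r in Icc 0 t, exp (-(c * r)) * g r := by
  have hrefl := measurePreserving_sub_left_Icc t
  have hemb : MeasurableEmbedding fun s : ℝ => t - s :=
    (MeasurableEquiv.subLeft t).measurableEmbedding
  have hmem : ∀ s ∈ Icc 0 t, t - s ∈ Icc 0 t := fun s hs => ⟨by linarith [hs.2], by linarith [hs.1]⟩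
  have hg_refl : IntegrableOn (fun s => g (t - s)) (Icc 0 t) :=
    (hrefl.integrable_comp_emb hemb).2 hg
  calc ∫ s in Icc 0 t, h s * g (t - s)
      ≤ ∫ s in Icc 0 t, C * exp (c * s) * g (t - s) := by
        refine integral_mono_of_nonneg ?_ (hg_refl.continuousOn_mul (by fun_prop) isCompact_Icc) ?_
        · exact ae_restrict_of_forall_mem measurableSet_Icc fun s hs =>
            mul_nonneg (hh_nonneg s hs) (hg_nonneg _ (hmem s hs))
        · exact ae_restrict_of_forall_mem measurableSet_Icc fun s hs =>
            mul_le_mul_of_nonneg_right (hh_le s hs) (hg_nonneg _ (hmem s hs))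
    _ = C * exp (c * t) * ∫ s in Icc 0 t, exp (-(c * (t - s))) * g (t - s) := by
        rw [← integral_const_mul]
        refine integral_congr_ae (Eventually.of_forall fun s => ?_)
        simp only [mul_sub, neg_sub, exp_sub]
        field_simp
    _ = C * exp (c * t) * ∫ r in Icc 0 t, exp (-(c * r)) * g r := by
        rw [hrefl.integral_comp hemb (fun r => exp (-(c * r)) * g r)]

theorem le_mul_pow_mul_exp_of_le_convolution {T κ c q M : ℝ} {g : ℝ → ℝ} {f : ℕ → ℝ → ℝ}
    (hκ : 0 ≤ κ) (hc : 0 ≤ c) (hg_nonneg : ∀ t ∈ Icc 0 T, 0 ≤ g t)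
    (hg_int : IntegrableOn g (Icc 0 T)) (hf_nonneg : ∀ n, ∀ t ∈ Icc 0 T, 0 ≤ f n t)
    (hf0 : ∀ t ∈ Icc 0 T, f 0 t ≤ M)
    (hrec : ∀ n, ∀ t ∈ Icc 0 T, f (n + 1) t ≤ κ * ∫ s in Icc 0 t, f n s * g (t - s))
    (hq : κ * ∫ r in Icc 0 T, exp (-(c * r)) * g r ≤ q) (n : ℕ) {t : ℝ} (ht : t ∈ Icc 0 T) :
    f n t ≤ M * q ^ n * exp (c * t) := by
  have hM : 0 ≤ M := (hf_nonneg 0 t ht).trans (hf0 t ht)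
  have hweighted_int : IntegrableOn (fun r => exp (-(c * r)) * g r) (Icc 0 T) :=
    hg_int.continuousOn_mul (by fun_prop) isCompact_Icc
  have hweighted_nonneg : ∀ r ∈ Icc 0 T, 0 ≤ exp (-(c * r)) * g r := fun r hr =>
    mul_nonneg (exp_nonneg _) (hg_nonneg r hr)
  have hq0 : 0 ≤ q :=
    (mul_nonneg hκ (setIntegral_nonneg measurableSet_Icc hweighted_nonneg)).trans hq
  induction n generalizing t with
  | zero =>
    simpa using (hf0 t ht).trans (le_mul_of_one_le_right hM (one_le_exp (by nlinarith [ht.1])))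
  | succ n ih =>
    have hsub : Icc 0 t ⊆ Icc 0 T := Icc_subset_Icc_right ht.2
    have hconv := setIntegral_mul_comp_sub_le_of_le_exp (hg_int.mono_set hsub)
      (fun r hr => hg_nonneg r (hsub hr)) (fun s hs => hf_nonneg n s (hsub hs))
      (fun s hs => ih (hsub hs))
    have hmono : ∫ r in Icc 0 t, exp (-(c * r)) * g r ≤ ∫ r in Icc 0 T, exp (-(c * r)) * g r :=
      setIntegral_mono_set hweighted_int
        (ae_restrict_of_forall_mem measurableSet_Icc hweighted_nonneg) hsub.eventuallyLE
    calc f (n + 1) t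
        ≤ κ * (M * q ^ n * exp (c * t) * ∫ r in Icc 0 t, exp (-(c * r)) * g r) :=
          (hrec n t ht).trans (mul_le_mul_of_nonneg_left hconv hκ)
      _ ≤ κ * (M * q ^ n * exp (c * t) * ∫ r in Icc 0 T, exp (-(c * r)) * g r) := by gcongr
      _ = M * q ^ n * exp (c * t) * (κ * ∫ r in Icc 0 T, exp (-(c * r)) * g r) := by ring
      _ ≤ M * q ^ n * exp (c * t) * q := by gcongr
      _ = M * q ^ (n + 1) * exp (c * t) := by ring

theorem summable_rpow_half_of_le_mul_pow {a : ℕ → ℝ} {C q : ℝ} (ha : ∀ n, 0 ≤ a n)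
    (hq : 0 ≤ q) (hq1 : q < 1) (hle : ∀ n, a n ≤ C * q ^ n) :
    Summable fun n => a n ^ ((1 : ℝ) / 2) := by
  have hC : 0 ≤ C := by simpa using (ha 0).trans (hle 0)
  have hgeom : Summable fun n : ℕ => (q ^ ((1 : ℝ) / 2)) ^ n :=
    summable_geometric_of_lt_one (rpow_nonneg hq _) (rpow_lt_one hq hq1 (by norm_num))
  refine Summable.of_nonneg_of_le (fun n => rpow_nonneg (ha n) _) (fun n => ?_)
    (hgeom.mul_left (C ^ ((1 : ℝ) / 2)))
  calc a n ^ ((1 : ℝ) / 2) ≤ (C * q ^ n) ^ ((1 : ℝ) / 2) := by gcongr; exacts [ha n, hle n]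
    _ = C ^ ((1 : ℝ) / 2) * (q ^ ((1 : ℝ) / 2)) ^ n := by
      rw [mul_rpow hC (pow_nonneg hq n), rpow_pow_comm hq]

theorem stmt_5_general (T : ℝ) (κ : ℝ) (hκ : 0 ≤ κ)
    (g : ℝ → ℝ)
    (hg_nonneg : ∀ t ∈ Icc (0 : ℝ) T, 0 ≤ g t)
    (hg_int : IntegrableOn g (Icc (0 : ℝ) T))
    (f : ℕ → ℝ → ℝ)
    (hf_nonneg : ∀ n, ∀ t ∈ Icc (0 : ℝ) T, 0 ≤ f n t)
    (hf0_bdd : BddAbove (f 0 '' Icc (0 : ℝ) T))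
    (hrec : ∀ n, ∀ t ∈ Icc (0 : ℝ) T,
      f (n + 1) t ≤ κ * ∫ s in Icc (0 : ℝ) t, f n s * g (t - s)) :
    Summable (fun n : ℕ => (sSup (f n '' Icc (0 : ℝ) T)) ^ ((1 : ℝ) / 2)) := by
  obtain ⟨c, hc, hq⟩ : ∃ c, 0 ≤ c ∧ κ * ∫ r in Icc 0 T, exp (-(c * r)) * g r < 1 / 4 := by
    have hlim := (tendsto_setIntegral_exp_neg_mul_mul measurableSet_Ioc Ioc_subset_Ioi_self
      (hg_int.mono_set Ioc_subset_Icc_self)).const_mul κ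
    simp_rw [mul_zero, ← integral_Icc_eq_integral_Ioc] at hlim
    exact ((eventually_ge_atTop 0).and (hlim.eventually_lt_const (by norm_num))).exists
  set M := sSup (f 0 '' Icc 0 T)
  have hM : 0 ≤ M := Real.sSup_nonneg (by rintro _ ⟨t, ht, rfl⟩; exact hf_nonneg 0 t ht)
  refine summable_rpow_half_of_le_mul_pow (C := M * exp (c * T))
    (fun n => Real.sSup_nonneg (by rintro _ ⟨t, ht, rfl⟩; exact hf_nonneg n t ht))
    (by norm_num : (0 : ℝ) ≤ 1 / 4) (by norm_num) fun n => Real.sSup_le ?_ (by positivity)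
  rintro _ ⟨t, ht, rfl⟩
  calc f n t ≤ M * (1 / 4) ^ n * exp (c * t) :=
        le_mul_pow_mul_exp_of_le_convolution hκ hc hg_nonneg hg_int hf_nonneg
          (fun t ht => le_csSup hf0_bdd ⟨t, ht, rfl⟩) hrec hq.le n ht
    _ ≤ M * (1 / 4) ^ n * exp (c * T) := by gcongr; exact ht.2
    _ = M * exp (c * T) * (1 / 4) ^ n := by ring

/-- Dalang's Gronwall-type lemma (Lemma 15 of Dalang (1999) with `k₁ = k₂ = 0`):
if `f_{n+1}(t) ≤ κ ∫₀ᵗ f_n(s) g(t-s) ds` on `[0,T]` and `f_0` is bounded, then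
`Σ_{n≥0} (sup_{t∈[0,T]} f_n(t))^{1/2} < ∞`. -/
theorem stmt_5 (T : ℝ) (hT : 0 < T) (κ : ℝ) (hκ : 0 ≤ κ)
    (g : ℝ → ℝ) (hg_meas : Measurable g)
    (hg_nonneg : ∀ t ∈ Icc (0 : ℝ) T, 0 ≤ g t)
    (hg_int : IntegrableOn g (Icc (0 : ℝ) T))
    (f : ℕ → ℝ → ℝ) (hf_meas : ∀ n, Measurable (f n))
    (hf_nonneg : ∀ n, ∀ t ∈ Icc (0 : ℝ) T, 0 ≤ f n t)
    (hf0_bdd : BddAbove (f 0 '' Icc (0 : ℝ) T))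
    (hrec : ∀ n, ∀ t ∈ Icc (0 : ℝ) T,
      f (n + 1) t ≤ κ * ∫ s in Icc (0 : ℝ) t, f n s * g (t - s)) :
    Summable (fun n : ℕ => (sSup (f n '' Icc (0 : ℝ) T)) ^ ((1 : ℝ) / 2)) :=
  stmt_5_general T κ hκ g hg_nonneg hg_int f hf_nonneg hf0_bdd hrec
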